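/- The oriented graph on Z/14Z with edges x → x+1 and x → x−2 for all x, together with x → x+4 for even x and x → x−6 for odd x, contains no independent set of size 4 and no transitive tournament on 3 vertices. Consequently r(I_4, L_3) > 14. -/

import Mathlib

/-- An oriented graph: no loops, at most one directed edge per pair
(asymmetry implies irreflexivity). -/
def IsOriented {V : Type*} (E : V → V → Prop) : Prop :=
  ∀ x y, E x y → ¬ E y x

/-- The graph contains an independent set of size `m`. -/
def HasIndep {V : Type*} (E : V → V → Prop) (m : ℕ) : Prop :=
  ∃ s : Finset V, s.card = m ∧ ∀ x ∈ s, ∀ y ∈ s, ¬ E x y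

/-- The graph contains a transitive tournament on `n` vertices. -/
def HasTransTour {V : Type*} (E : V → V → Prop) (n : ℕ) : Prop :=
  ∃ f : Fin n ↪ V, ∀ i j : Fin n, i < j → E (f i) (f j)

/-- `r(I_m, L_n)`: the least `k` such that every oriented graph on `k` vertices
contains an independent set of size `m` or a transitive tournament on `n` vertices. -/
noncomputable def ramseyIL (m n : ℕ) : ℕ :=
  sInf {k | ∀ (V : Type) (_ : Fintype V), Fintype.card V = k →
    ∀ E : V → V → Prop, IsOriented E → HasIndep E m ∨ HasTransTour E n}

/-- The oriented graph on ℤ/14ℤ with edges x → x+1 and x → x−2 for all x,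
x → x+4 for even x and x → x−6 for odd x. -/
def E14 (x y : ZMod 14) : Prop :=
  y - x = 1 ∨ y - x = 12 ∨ (x.val % 2 = 0 ∧ y - x = 4) ∨ (x.val % 2 = 1 ∧ y - x = 8)

/-!
Upper bound: in an oriented graph without transitive triangle the out- and in-neighbourhoods of a
vertex are independent, and the vertices non-adjacent to it contain no independent set one smaller.
So without independent `m`-sets there are at most `2(m-1) + 1 + (m-1)² - 1 = m² - 1` vertices,
whence `r(I_4, L_3) ≤ 16`. Lower bound: for `k ≤ 14`, the restriction of `E14` to `k` vertices is an
oriented graph with neither an independent 4-set nor a transitive triangle, since `E14` itself has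
neither (checked by exhaustion).
-/

section OrientedGraph

variable {V W : Type*} {E : V → V → Prop}

def IsIndep (E : V → V → Prop) (s : Finset V) : Prop :=
  ∀ x ∈ s, ∀ y ∈ s, ¬E x y

def NonAdj (E : V → V → Prop) (x y : V) : Prop :=
  x ≠ y ∧ ¬E x y ∧ ¬E y x

instance [DecidableEq V] [DecidableRel E] : DecidableRel (NonAdj E) :=
  fun _ _ => inferInstanceAs (Decidable (_ ∧ _ ∧ _))

theorem IsOriented.irrefl (h : IsOriented E) (x : V) : ¬E x x :=
  fun hx => h x x hx hx

theorem IsOriented.comap (f : W → V) (h : IsOriented E) :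
    IsOriented (fun x y => E (f x) (f y)) :=
  fun x y => h (f x) (f y)

theorem HasIndep.of_comap (f : W ↪ V) {m : ℕ} :
    HasIndep (fun x y => E (f x) (f y)) m → HasIndep E m := by
  rintro ⟨s, hs, hind⟩
  exact ⟨s.map f, by rw [Finset.card_map, hs], by simpa using hind⟩

theorem HasTransTour.of_comap (f : W ↪ V) {n : ℕ} :
    HasTransTour (fun x y => E (f x) (f y)) n → HasTransTour E n :=
  fun ⟨g, hg⟩ => ⟨g.trans f, hg⟩

theorem hasTransTour_three_iff (hirr : ∀ x, ¬E x x) :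
    HasTransTour E 3 ↔ ∃ a b c, E a b ∧ E b c ∧ E a c := by
  constructor
  · rintro ⟨f, hf⟩
    exact ⟨f 0, f 1, f 2, hf 0 1 (by decide), hf 1 2 (by decide), hf 0 2 (by decide)⟩
  · rintro ⟨a, b, c, hab, hbc, hac⟩
    have hne : ∀ {x y}, E x y → x ≠ y := fun hxy h => hirr _ (h ▸ hxy)
    refine ⟨⟨![a, b, c], ?_⟩, ?_⟩ <;> intro i j
    · fin_cases i <;> fin_cases j <;> simp [hne hab, hne hbc, hne hac, (hne hab).symm,
        (hne hbc).symm, (hne hac).symm]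
    · intro hij
      fin_cases i <;> fin_cases j <;>
        first | exact absurd hij (by decide) | exact hab | exact hbc | exact hac

theorem not_hasIndep_four
    (h : ∀ a b, NonAdj E a b → ∀ c, NonAdj E a c → NonAdj E b c →
      ∀ d, NonAdj E a d → NonAdj E b d → ¬NonAdj E c d) :
    ¬HasIndep E 4 := by
  classical
  rintro ⟨s, hs, hind⟩
  obtain ⟨a, b, c, d, hab, hac, had, hbc, hbd, hcd, rfl⟩ := Finset.card_eq_four.mp hs
  have nonAdj : ∀ {x y}, x ∈ ({a, b, c, d} : Finset V) → y ∈ ({a, b, c, d} : Finset V) →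
      x ≠ y → NonAdj E x y :=
    fun hx hy hxy => ⟨hxy, hind _ hx _ hy, hind _ hy _ hx⟩
  exact h a b (nonAdj (by simp) (by simp) hab) c (nonAdj (by simp) (by simp) hac)
    (nonAdj (by simp) (by simp) hbc) d (nonAdj (by simp) (by simp) had)
    (nonAdj (by simp) (by simp) hbd) (nonAdj (by simp) (by simp) hcd)

section NoTransTriangle

variable (hT : ∀ a b c, E a b → E b c → E a c → False)
include hT

theorem isIndep_filter_out (v : V) (s : Finset V) [DecidablePred (E v)] :
    IsIndep E (s.filter (E v)) := by
  intro x hx y hy hxy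
  exact hT v x y (Finset.mem_filter.mp hx).2 hxy (Finset.mem_filter.mp hy).2

theorem isIndep_filter_in (v : V) (s : Finset V) [DecidablePred (E · v)] :
    IsIndep E (s.filter (E · v)) := by
  intro x hx y hy hxy
  exact hT x y v hxy (Finset.mem_filter.mp hy).2 (Finset.mem_filter.mp hx).2

theorem card_lt_sq_of_forall_isIndep_card_lt (hirr : ∀ x, ¬E x x) (m : ℕ) (s : Finset V)
    (hs : ∀ t ⊆ s, IsIndep E t → t.card < m) : s.card < m ^ 2 := by
  classical
  induction m generalizing s with
  | zero => exact absurd (hs ∅ (Finset.empty_subset s) (by simp [IsIndep])) (by simp)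
  | succ m ih =>
    obtain rfl | ⟨v, hv⟩ := s.eq_empty_or_nonempty
    · simp
    set N := s.filter (NonAdj E v)
    have hout := hs _ (Finset.filter_subset _ _) (isIndep_filter_out hT v s)
    have hin := hs _ (Finset.filter_subset _ _) (isIndep_filter_in hT v s)
    have hN : N.card < m ^ 2 := by
      refine ih N fun t htN ht => ?_
      have hvt : v ∉ t := fun hvt => (Finset.mem_filter.mp (htN hvt)).2.1 rfl
      have hnonAdj : ∀ x ∈ t, NonAdj E v x := fun x hx => (Finset.mem_filter.mp (htN hx)).2
      have := hs (insert v t) (Finset.insert_subset hv (htN.trans (Finset.filter_subset _ _)))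
        (by
          simp only [IsIndep, Finset.forall_mem_insert]
          exact ⟨⟨hirr v, fun y hy => (hnonAdj y hy).2.1⟩,
            fun x hx => ⟨(hnonAdj x hx).2.2, ht x hx⟩⟩)
      rw [Finset.card_insert_of_notMem hvt] at this
      omega
    have hcover : s ⊆ insert v (s.filter (E v) ∪ s.filter (E · v) ∪ N) := by
      intro x hx
      by_cases hxv : x = v
      · exact hxv ▸ Finset.mem_insert_self _ _
      simp only [Finset.mem_insert, Finset.mem_union, Finset.mem_filter, N, NonAdj]
      tauto
    calc s.card ≤ (s.filter (E v) ∪ s.filter (E · v) ∪ N).card + 1 :=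
          (Finset.card_le_card hcover).trans (Finset.card_insert_le _ _)
      _ ≤ (s.filter (E v)).card + (s.filter (E · v)).card + N.card + 1 := by
          grw [Finset.card_union_le, Finset.card_union_le]
      _ < (m + 1) ^ 2 := by nlinarith

end NoTransTriangle

theorem hasIndep_or_hasTransTour_three_of_sq_le_card [Fintype V] (hO : IsOriented E) {m : ℕ}
    (hcard : m ^ 2 ≤ Fintype.card V) : HasIndep E m ∨ HasTransTour E 3 := by
  by_contra! ⟨hI, hT⟩
  rw [hasTransTour_three_iff hO.irrefl] at hT
  have hT' : ∀ a b c, E a b → E b c → E a c → False :=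
    fun a b c hab hbc hac => hT ⟨a, b, c, hab, hbc, hac⟩
  refine (card_lt_sq_of_forall_isIndep_card_lt hT' hO.irrefl m Finset.univ
    fun t _ ht => ?_).not_ge hcard
  by_contra! hmt
  obtain ⟨u, hut, hu⟩ := Finset.exists_subset_card_eq hmt
  exact hI ⟨u, hu, fun x hx y hy => ht x (hut hx) y (hut hy)⟩

theorem card_lt_ramseyIL [Fintype W] {E : W → W → Prop} {m n k : ℕ}
    (hk : ∀ (V : Type) (_ : Fintype V), Fintype.card V = k →
      ∀ E : V → V → Prop, IsOriented E → HasIndep E m ∨ HasTransTour E n)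
    (hO : IsOriented E) (hI : ¬HasIndep E m) (hT : ¬HasTransTour E n) :
    Fintype.card W < ramseyIL m n := by
  by_contra! hle
  obtain ⟨f⟩ := Function.Embedding.nonempty_of_card_le (α := Fin (ramseyIL m n)) (β := W)
    (by simpa using hle)
  have hmem : ramseyIL m n ∈ _ := Nat.sInf_mem ⟨k, hk⟩
  rcases hmem (Fin (ramseyIL m n)) inferInstance (Fintype.card_fin _) _ (hO.comap f) with h | h
  · exact hI (h.of_comap f)
  · exact hT (h.of_comap f)

end OrientedGraph

instance : DecidableRel E14 := fun x y => by unfold E14; infer_instance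

theorem E14_isOriented : IsOriented E14 := by
  unfold IsOriented; decide

theorem not_exists_E14_triangle : ¬∃ a b c : ZMod 14, E14 a b ∧ E14 b c ∧ E14 a c := by
  decide

theorem not_hasIndep_E14 : ¬HasIndep E14 4 :=
  not_hasIndep_four (by decide)

theorem stmt15 :
    (¬ HasIndep E14 4 ∧
      ¬ ∃ a b c : ZMod 14, E14 a b ∧ E14 b c ∧ E14 a c) ∧
    14 < ramseyIL 4 3 := by
  have hT : ¬HasTransTour E14 3 :=
    (hasTransTour_three_iff E14_isOriented.irrefl).not.mpr not_exists_E14_triangle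
  refine ⟨⟨not_hasIndep_E14, not_exists_E14_triangle⟩, ?_⟩
  simpa using card_lt_ramseyIL (k := 16)
    (fun _ _ hV _ hO => hasIndep_or_hasTransTour_three_of_sq_le_card (m := 4) hO hV.ge)
    E14_isOriented not_hasIndep_E14 hT
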